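/- Exact completeness of the partial Krawtchouk hierarchy at level n (Theorem 1.3, pseudoprobability form): assume ℓ ≥ n. Then q^k₀ is the greatest element of the set {∑_S |S| · p(S) : p feasible for the distance-constrained pseudoprobability program at level ℓ}; that is, every feasible p satisfies ∑_S |S| · p(S) ≤ q^k₀, and some feasible p attains this value (so the optimum value equals A_q^Lin(n,d) = q^k₀). -/

import Mathlib

open Classical

noncomputable section

/-- A subspace `C ≤ F^n` has minimum distance at least `d` if every nonzero
codeword has Hamming weight at least `d`. -/
def MinDistGe (n d : ℕ) (F : Type) [Field F] [Fintype F]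
    (C : Submodule F (Fin n → F)) : Prop :=
  ∀ w ∈ C, w ≠ 0 → d ≤ hammingNorm w

/-- `k₀`: the maximum dimension of a subspace of `F^n` of minimum distance at
least `d`. -/
def kzero (n d : ℕ) (F : Type) [Field F] [Fintype F] : ℕ :=
  sSup {k : ℕ | ∃ C : Submodule F (Fin n → F), MinDistGe n d F C ∧ Module.finrank F C = k}

/-- Feasibility for the distance-constrained pseudoprobability program at level `ℓ`. -/
def PseudoFeasibleDist (n ℓ d : ℕ) (F : Type) [Field F] [Fintype F]
    (p : Submodule F (Fin n → F) → ℝ) : Prop :=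
  (∑ S : Submodule F (Fin n → F), p S) = 1 ∧
  (∀ S : Submodule F (Fin n → F), (∃ w ∈ S, w ≠ 0 ∧ hammingNorm w ≤ d - 1) → p S = 0) ∧
  (∀ U : Submodule F (Fin n → F),
      0 ≤ ∑ S : Submodule F (Fin n → F),
        if S ≤ U then (Fintype.card S : ℝ) ^ ℓ * p S else 0) ∧
  (∀ U : Submodule F (Fin n → F),
      0 ≤ ∑ S : Submodule F (Fin n → F), if U ≤ S then p S else 0)

/-!
Weak duality. There are nonnegative dual coefficients `a_j`, depending only on `j = dim U`, with
`∑_{U ≥ S} a_{dim U} = (q^{k₀} - |S|) / |S|^ℓ` for every `S` of dimension at most `k₀`. As `p`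
vanishes on every other `S`, exchanging the two sums gives
`q^{k₀} - ∑_S |S| p(S) = ∑_U a_{dim U} ∑_{S ≤ U} |S|^ℓ p(S) ≥ 0`.

The number of `j`-dimensional subspaces above a `k`-dimensional one is the Gaussian binomial
`[n - k, j - k]_q`, so the system for the `a_j` is triangular and is solved downwards from
`j = k₀`. The solution stays nonnegative because `[m + 1, r + 1]_q ≤ (q^{m + 1} - 1) [m, r]_q` and
`q^{n - k} - 1 ≤ q^ℓ` when `ℓ ≥ n`. The bound is attained by the point mass at an optimal code.
-/

open Module Submodule

section Counting

variable {F V : Type*} [Field F] [AddCommGroup V] [Module F V]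

theorem finrank_comap_mkQ [FiniteDimensional F V] (p : Submodule F V) (W : Submodule F (V ⧸ p)) :
    finrank F (W.comap p.mkQ) = finrank F W + finrank F p := by
  set U := W.comap p.mkQ
  have hpU : p ≤ U := le_comap_mkQ p W
  have hrange : LinearMap.range (p.mkQ ∘ₗ U.subtype) = W := by
    rw [LinearMap.range_comp, range_subtype, map_comap_eq_of_surjective p.mkQ_surjective]
  have hker : LinearMap.ker (p.mkQ ∘ₗ U.subtype) = p.comap U.subtype := by
    rw [LinearMap.ker_comp, ker_mkQ]
  have := LinearMap.finrank_range_add_finrank_ker (p.mkQ ∘ₗ U.subtype)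
  rwa [hrange, hker, (comapSubtypeEquivOfLe hpU).finrank_eq, eq_comm] at this

variable (F) in
def subspaceCount (m r : ℕ) : ℕ :=
  Nat.card {W : Submodule F (Fin m → F) // finrank F W = r}

theorem subspaceCount_zero (m : ℕ) : subspaceCount F m 0 = 1 :=
  Nat.card_eq_one_iff_unique.mpr
    ⟨⟨fun W W' => Subtype.ext <| by rw [finrank_eq_zero.mp W.2, finrank_eq_zero.mp W'.2]⟩,
      ⟨⟨⊥, finrank_bot F _⟩⟩⟩

theorem card_finrank_eq_subspaceCount [FiniteDimensional F V] (r : ℕ) :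
    Nat.card {W : Submodule F V // finrank F W = r} = subspaceCount F (finrank F V) r := by
  let e : V ≃ₗ[F] (Fin (finrank F V) → F) :=
    LinearEquiv.ofFinrankEq _ _ (finrank_fin_fun F).symm
  exact Nat.card_congr <| (orderIsoMapComap e).toEquiv.subtypeEquiv fun W => by
    show _ ↔ finrank F (W.map e.toLinearMap) = r
    rw [LinearEquiv.finrank_map_eq]

theorem card_le_finrank_eq [FiniteDimensional F V] (S : Submodule F V) {j : ℕ}
    (hj : finrank F S ≤ j) :
    Nat.card {U : Submodule F V // S ≤ U ∧ finrank F U = j}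
      = subspaceCount F (finrank F V - finrank F S) (j - finrank F S) := by
  have hquot : finrank F (V ⧸ S) = finrank F V - finrank F S := by
    have := S.finrank_quotient_add_finrank
    omega
  rw [← hquot, ← card_finrank_eq_subspaceCount]
  refine Nat.card_congr ((Equiv.subtypeSubtypeEquivSubtypeInter (S ≤ ·) _).symm.trans ?_)
  exact ((comapMkQRelIso S).toEquiv.subtypeEquiv fun W => by
    show _ ↔ finrank F (W.comap S.mkQ) = j
    rw [finrank_comap_mkQ]; omega).symm

/-- Double counting the pairs `(v, W)` with `v ∈ W` nonzero: every `W` contains some `v`, and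
each `v` lies in `subspaceCount F m r` subspaces of dimension `r + 1`. -/
theorem subspaceCount_succ_le [Fintype F] (m r : ℕ) :
    subspaceCount F (m + 1) (r + 1) ≤ (Fintype.card F ^ (m + 1) - 1) * subspaceCount F m r := by
  let V := Fin (m + 1) → F
  have hne : ∀ W : {W : Submodule F V // finrank F W = r + 1}, ∃ v ∈ W.1, v ≠ 0 := fun W =>
    exists_mem_ne_zero_of_ne_bot fun h => by
      have := W.2
      rw [h, finrank_bot] at this
      omega
  choose v hvW hv0 using hne
  let Φ (W : {W : Submodule F V // finrank F W = r + 1}) :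
      Σ u : {u : V // u ≠ 0}, {U : Submodule F V // span F {u.1} ≤ U ∧ finrank F U = r + 1} :=
    ⟨⟨v W, hv0 W⟩, ⟨W, (span_singleton_le_iff_mem _ _).mpr (hvW W), W.2⟩⟩
  have hΦ : Function.Injective Φ :=
    Function.LeftInverse.injective (g := fun x => ⟨x.2.1, x.2.2.2⟩) fun _ => rfl
  have hfiber (u : {u : V // u ≠ 0}) :
      Nat.card {U : Submodule F V // span F {u.1} ≤ U ∧ finrank F U = r + 1}
        = subspaceCount F m r := by
    rw [card_le_finrank_eq _ (by rw [finrank_span_singleton u.2]; omega),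
      finrank_span_singleton u.2, finrank_fin_fun]
    rfl
  have hcard : Fintype.card {u : V // u ≠ 0} = Fintype.card F ^ (m + 1) - 1 := by
    simp [Fintype.card_subtype_compl, V]
  calc subspaceCount F (m + 1) (r + 1) ≤ Nat.card (Σ u : {u : V // u ≠ 0}, _) :=
        Nat.card_le_card_of_injective Φ hΦ
    _ = _ := by
      rw [Nat.card_sigma, Finset.sum_congr rfl fun u _ => hfiber u, Finset.sum_const,
        Finset.card_univ, hcard, smul_eq_mul]

theorem sum_ite_le_eq_sum_subspaceCount [Fintype V] (S : Submodule F V) (f : ℕ → ℝ) :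
    ∑ U : Submodule F V, (if S ≤ U then f (finrank F U) else 0)
      = ∑ j ∈ Finset.Icc (finrank F S) (finrank F V),
          (subspaceCount F (finrank F V - finrank F S) (j - finrank F S) : ℝ) * f j := by
  rw [← Finset.sum_filter, ← Finset.sum_fiberwise_of_maps_to
    (g := fun U : Submodule F V => finrank F U) (t := Finset.Icc (finrank F S) (finrank F V))
    fun U hU => Finset.mem_Icc.mpr ⟨finrank_mono (Finset.mem_filter.mp hU).2, finrank_le U⟩]
  refine Finset.sum_congr rfl fun j hj => ?_
  rw [← card_le_finrank_eq S (Finset.mem_Icc.mp hj).1, Nat.card_eq_fintype_card,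
    Fintype.card_subtype, Finset.filter_filter, ← nsmul_eq_mul, ← Finset.sum_const]
  exact Finset.sum_congr rfl fun U hU => by rw [(Finset.mem_filter.mp hU).2.2]

end Counting

section DualCoefficients

variable (F : Type*) [Field F] (n K : ℕ) (g : ℕ → ℝ)

def dualCoeff (k : ℕ) : ℝ :=
  if k ≤ K then
    g k - ∑ j ∈ (Finset.Ioc k K).attach, (subspaceCount F (n - k) (j - k) : ℝ) * dualCoeff j
  else 0
termination_by K - k
decreasing_by have := Finset.mem_Ioc.mp j.2; omega

theorem dualCoeff_of_lt {k : ℕ} (hk : K < k) : dualCoeff F n K g k = 0 := by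
  rw [dualCoeff, if_neg (by omega)]

theorem sum_Icc_dualCoeff {k : ℕ} (hk : k ≤ K) :
    ∑ j ∈ Finset.Icc k K, (subspaceCount F (n - k) (j - k) : ℝ) * dualCoeff F n K g j = g k := by
  rw [← Finset.Ioc_insert_left hk, Finset.sum_insert (by simp), Nat.sub_self,
    subspaceCount_zero, Nat.cast_one, one_mul, dualCoeff, if_pos hk,
    Finset.sum_attach (Finset.Ioc k K)
      fun j => (subspaceCount F (n - k) (j - k) : ℝ) * dualCoeff F n K g j,
    sub_add_cancel]

variable {F n K g} in
theorem dualCoeff_nonneg [Fintype F] (hKn : K ≤ n)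
    (hg : ∀ k < K, ((Fintype.card F : ℝ) ^ (n - k) - 1) * g (k + 1) ≤ g k) (hgK : 0 ≤ g K)
    (k : ℕ) : 0 ≤ dualCoeff F n K g k := by
  induction k using dualCoeff.induct K with
  | case2 k hk => rw [dualCoeff_of_lt F n K g (by omega)]
  | case1 k hk ih =>
    rw [dualCoeff, if_pos hk, sub_nonneg, Finset.sum_attach (Finset.Ioc k K)
      fun j => (subspaceCount F (n - k) (j - k) : ℝ) * dualCoeff F n K g j]
    rcases hk.eq_or_lt with rfl | hk
    · simpa using hgK
    set c : ℝ := (Fintype.card F : ℝ) ^ (n - k) - 1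
    have hcount (j : ℕ) (hj : j ∈ Finset.Ioc k K) :
        (subspaceCount F (n - k) (j - k) : ℝ)
          ≤ c * subspaceCount F (n - (k + 1)) (j - (k + 1)) := by
      have := subspaceCount_succ_le (F := F) (n - (k + 1)) (j - (k + 1))
      rw [show n - (k + 1) + 1 = n - k by omega,
        show j - (k + 1) + 1 = j - k by have := Finset.mem_Ioc.mp hj; omega] at this
      have hq : 1 ≤ Fintype.card F ^ (n - k) := Nat.one_le_pow _ _ Fintype.card_pos
      have hcast := (Nat.cast_le (α := ℝ)).mpr this
      rwa [Nat.cast_mul, Nat.cast_sub hq, Nat.cast_pow, Nat.cast_one] at hcast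
    calc ∑ j ∈ Finset.Ioc k K, (subspaceCount F (n - k) (j - k) : ℝ) * dualCoeff F n K g j
        ≤ ∑ j ∈ Finset.Ioc k K,
            c * ((subspaceCount F (n - (k + 1)) (j - (k + 1)) : ℝ) * dualCoeff F n K g j) :=
          Finset.sum_le_sum fun j hj => by
            rw [← mul_assoc]
            exact mul_le_mul_of_nonneg_right (hcount j hj) (ih ⟨j, hj⟩)
      _ = c * g (k + 1) := by
          rw [← Finset.mul_sum, ← Finset.Icc_add_one_left_eq_Ioc,
            sum_Icc_dualCoeff F n K g (show k + 1 ≤ K from hk)]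
      _ ≤ g k := hg k hk

variable {F n K g} in
theorem sum_ite_le_dualCoeff_finrank {V : Type*} [AddCommGroup V] [Module F V] [Fintype V]
    (S : Submodule F V) (hS : finrank F S ≤ K) (hK : K ≤ finrank F V) :
    ∑ U : Submodule F V, (if S ≤ U then dualCoeff F (finrank F V) K g (finrank F U) else 0)
      = g (finrank F S) := by
  rw [sum_ite_le_eq_sum_subspaceCount, ← sum_Icc_dualCoeff F _ K g hS]
  refine (Finset.sum_subset (Finset.Icc_subset_Icc_right hK) fun j _ hj => ?_).symm
  rw [dualCoeff_of_lt F _ K g (by simp only [Finset.mem_Icc] at *; omega), mul_zero]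

end DualCoefficients

theorem sum_mul_sum_ite_le_comm {α : Type*} [Fintype α] [LE α] [DecidableRel (α := α) (· ≤ ·)]
    (c x : α → ℝ) :
    ∑ U, c U * ∑ S, (if S ≤ U then x S else 0) = ∑ S, (∑ U, if S ≤ U then c U else 0) * x S := by
  simp_rw [Finset.mul_sum, Finset.sum_mul, mul_ite, ite_mul, mul_zero, zero_mul, mul_comm (c _)]
  exact Finset.sum_comm

theorem pow_sub_one_mul_div_pow_succ_le {Q : ℝ} (hQ : 1 ≤ Q) {m ℓ k K : ℕ} (hm : m ≤ ℓ)
    (hk : k < K) :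
    (Q ^ m - 1) * ((Q ^ K - Q ^ (k + 1)) / Q ^ (ℓ * (k + 1))) ≤ (Q ^ K - Q ^ k) / Q ^ (ℓ * k) := by
  have hQ0 : 0 < Q := by linarith
  have hm' : Q ^ m - 1 ≤ Q ^ ℓ := by linarith [pow_le_pow_right₀ hQ hm]
  have h : (Q ^ m - 1) * (Q ^ K - Q ^ (k + 1)) ≤ Q ^ ℓ * (Q ^ K - Q ^ k) :=
    mul_le_mul hm' (by linarith [pow_le_pow_right₀ hQ (Nat.le_add_right k 1)])
      (sub_nonneg.mpr (pow_le_pow_right₀ hQ hk)) (by positivity)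
  rw [mul_div_assoc', div_le_div_iff₀ (by positivity) (by positivity), mul_add_one,
    pow_add Q (ℓ * k) ℓ]
  linarith [mul_le_mul_of_nonneg_right h (pow_pos hQ0 (ℓ * k)).le]

section Codes

variable {n d : ℕ} {F : Type} [Field F] [Fintype F]

theorem minDistGe_bot : MinDistGe n d F ⊥ :=
  fun _ hw hw0 => absurd ((Submodule.mem_bot F).mp hw) hw0

theorem bddAbove_finrank_minDistGe :
    BddAbove {k : ℕ | ∃ C : Submodule F (Fin n → F), MinDistGe n d F C ∧ finrank F C = k} :=
  ⟨n, by rintro _ ⟨C, -, rfl⟩; simpa using C.finrank_le⟩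

theorem finrank_le_kzero {C : Submodule F (Fin n → F)} (hC : MinDistGe n d F C) :
    finrank F C ≤ kzero n d F :=
  le_csSup bddAbove_finrank_minDistGe ⟨C, hC, rfl⟩

theorem exists_minDistGe_finrank_eq_kzero :
    ∃ C : Submodule F (Fin n → F), MinDistGe n d F C ∧ finrank F C = kzero n d F :=
  Nat.sSup_mem (s := {k | ∃ C : Submodule F (Fin n → F), MinDistGe n d F C ∧ finrank F C = k})
    ⟨0, ⊥, minDistGe_bot, finrank_bot F _⟩ bddAbove_finrank_minDistGe

theorem kzero_le : kzero n d F ≤ n := by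
  obtain ⟨C, -, hC⟩ := exists_minDistGe_finrank_eq_kzero (n := n) (d := d) (F := F)
  simpa [hC] using C.finrank_le

theorem PseudoFeasibleDist.minDistGe {ℓ : ℕ} {p : Submodule F (Fin n → F) → ℝ}
    (hp : PseudoFeasibleDist n ℓ d F p) {S : Submodule F (Fin n → F)} (hS : p S ≠ 0) :
    MinDistGe n d F S := fun w hw hw0 => by
  by_contra h
  exact hS (hp.2.1 S ⟨w, hw, hw0, by omega⟩)

theorem pseudoFeasibleDist_indicator (ℓ : ℕ) {C : Submodule F (Fin n → F)}
    (hC : MinDistGe n d F C) : PseudoFeasibleDist n ℓ d F fun S => if S = C then 1 else 0 := by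
  refine ⟨by simp, ?_, fun U => ?_, fun U => ?_⟩
  · rintro S ⟨w, hw, hw0, hwt⟩
    refine if_neg ?_
    rintro rfl
    have := hC w hw hw0
    have := hammingNorm_pos_iff.mpr hw0
    omega
  all_goals exact Finset.sum_nonneg fun S _ => by split_ifs <;> positivity

end Codes

theorem exists_dual_certificate {n ℓ : ℕ} (d : ℕ) (F : Type) [Field F] [Fintype F]
    (hnl : n ≤ ℓ) :
    ∃ a : Submodule F (Fin n → F) → ℝ, (∀ U, 0 ≤ a U) ∧
      ∀ S : Submodule F (Fin n → F), finrank F S ≤ kzero n d F →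
        (∑ U, if S ≤ U then a U else 0) * (Fintype.card S : ℝ) ^ ℓ
          = (Fintype.card F : ℝ) ^ kzero n d F - Fintype.card S := by
  have hq : (1 : ℝ) ≤ Fintype.card F := Nat.one_le_cast.mpr Fintype.card_pos
  have hV : finrank F (Fin n → F) = n := finrank_fin_fun F
  let g (k : ℕ) : ℝ :=
    ((Fintype.card F : ℝ) ^ kzero n d F - (Fintype.card F : ℝ) ^ k)
      / (Fintype.card F : ℝ) ^ (ℓ * k)
  refine ⟨fun U => dualCoeff F n (kzero n d F) g (finrank F U), fun U => ?_, fun S hS => ?_⟩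
  · exact dualCoeff_nonneg kzero_le
      (fun k hk => pow_sub_one_mul_div_pow_succ_le hq (by omega) hk) (by simp [g]) _
  · have hsum := sum_ite_le_dualCoeff_finrank (g := g) S hS (by rw [hV]; exact kzero_le)
    rw [hV] at hsum
    have hcard : (Fintype.card S : ℝ) = (Fintype.card F : ℝ) ^ finrank F S := by
      exact_mod_cast Module.card_eq_pow_finrank (K := F) (V := S)
    rw [hsum, hcard, ← pow_mul, mul_comm (finrank F S) ℓ]
    exact div_mul_cancel₀ _ (pow_ne_zero _ (by positivity))

theorem sum_card_mul_le_pow_kzero {n ℓ d : ℕ} {F : Type} [Field F] [Fintype F] (hnl : n ≤ ℓ)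
    {p : Submodule F (Fin n → F) → ℝ} (hp : PseudoFeasibleDist n ℓ d F p) :
    ∑ S : Submodule F (Fin n → F), (Fintype.card S : ℝ) * p S
      ≤ (Fintype.card F : ℝ) ^ kzero n d F := by
  obtain ⟨a, ha, hcert⟩ := exists_dual_certificate d F hnl
  have hterm (S : Submodule F (Fin n → F)) :
      ((Fintype.card F : ℝ) ^ kzero n d F - Fintype.card S) * p S
        = (∑ U, if S ≤ U then a U else 0) * ((Fintype.card S : ℝ) ^ ℓ * p S) := by
    by_cases hpS : p S = 0
    · simp [hpS]
    rw [← mul_assoc, hcert S (finrank_le_kzero (hp.minDistGe hpS))]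
  calc ∑ S : Submodule F (Fin n → F), (Fintype.card S : ℝ) * p S
      = (Fintype.card F : ℝ) ^ kzero n d F
          - ∑ U, a U * ∑ S, (if S ≤ U then (Fintype.card S : ℝ) ^ ℓ * p S else 0) := by
        rw [sum_mul_sum_ite_le_comm, ← Finset.sum_congr rfl fun S _ => hterm S]
        simp_rw [sub_mul, Finset.sum_sub_distrib, ← Finset.mul_sum, hp.1]
        ring
    _ ≤ (Fintype.card F : ℝ) ^ kzero n d F :=
        sub_le_self _ (Finset.sum_nonneg fun U _ => mul_nonneg (ha U) (hp.2.2.1 U))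

theorem partial_kraw_exact_completeness_general
    (n ℓ d : ℕ) (hnl : n ≤ ℓ)
    (F : Type) [Field F] [Fintype F] :
    IsGreatest
      {v : ℝ | ∃ p : Submodule F (Fin n → F) → ℝ, PseudoFeasibleDist n ℓ d F p ∧
        v = ∑ S : Submodule F (Fin n → F), (Fintype.card S : ℝ) * p S}
      ((Fintype.card F : ℝ) ^ (kzero n d F)) := by
  obtain ⟨C, hC, hCdim⟩ := exists_minDistGe_finrank_eq_kzero (n := n) (d := d) (F := F)
  refine ⟨⟨_, pseudoFeasibleDist_indicator ℓ hC, ?_⟩, ?_⟩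
  · simp [← hCdim, Module.card_eq_pow_finrank (K := F) (V := C)]
  · rintro _ ⟨p, hp, rfl⟩
    exact sum_card_mul_le_pow_kzero hnl hp

/-- **Exact completeness of the partial Krawtchouk hierarchy at level `n`
(Theorem 1.3, pseudoprobability form).** For `ℓ ≥ n`, the value `q^k₀` is the
greatest element of the set of objective values `∑_S |S| p S` over all `p`
feasible for the distance-constrained pseudoprobability program at level `ℓ`. -/
theorem partial_kraw_exact_completeness
    (n ℓ d : ℕ) (hn : 1 ≤ n) (hd : 1 ≤ d) (hdn : d ≤ n) (hnl : n ≤ ℓ)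
    (F : Type) [Field F] [Fintype F] :
    IsGreatest
      {v : ℝ | ∃ p : Submodule F (Fin n → F) → ℝ, PseudoFeasibleDist n ℓ d F p ∧
        v = ∑ S : Submodule F (Fin n → F), (Fintype.card S : ℝ) * p S}
      ((Fintype.card F : ℝ) ^ (kzero n d F)) :=
  partial_kraw_exact_completeness_general n ℓ d hnl F
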